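/- arXiv:2212.07746 — 5 statements merged into one kernel-verified Lean document; each statement's English description precedes it below -/
import Mathlib

section
/- Let η(z) = Σ_{j=1}^{q} a_j z^{-j} be a polar part with leading coefficient a_q ≠ 0, and let θ₀ ∈ ℝ. If there exist ε > 0 and δ > 0 such that Re(η(r e^{iθ'})) < 0 for all real θ' with |θ' − θ₀| < ε and all real r with 0 < r < δ, then Re(a_q e^{-i q θ₀}) < 0. (Negativity of the real part of a polar part on a small open sector around a direction forces strict negativity of the real part of the rotated leading coefficient in that direction.) -/
open Filter Topology

lemma aux_le (q : ℕ) (hq : 1 ≤ q) (a : ℕ → ℂ) (θ' : ℝ) (δ : ℝ) (hδ : 0 < δ)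
    (h : ∀ r : ℝ, 0 < r → r < δ →
      (∑ j ∈ Finset.Icc 1 q,
        a j * (((r : ℂ) * Complex.exp (Complex.I * (θ' : ℂ)))⁻¹) ^ j).re < 0) :
    (a q * Complex.exp (-(Complex.I * (q : ℂ) * (θ' : ℂ)))).re ≤ 0 := by
  set F : ℝ → ℂ := fun r => ∑ j ∈ Finset.Icc 1 q,
    a j * (r : ℂ) ^ (q - j) * Complex.exp (-(Complex.I * (j : ℂ) * (θ' : ℂ))) with hF
  have hF0 : F 0 = a q * Complex.exp (-(Complex.I * (q : ℂ) * (θ' : ℂ))) := by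
    simp only [hF]
    rw [Finset.sum_eq_single q]
    · simp
    · intro j hj hne
      have hjq : j < q := lt_of_le_of_ne (Finset.mem_Icc.mp hj).2 hne
      have : q - j ≠ 0 := Nat.sub_ne_zero_of_lt hjq
      simp [this]
    · intro hq'
      exact absurd (Finset.mem_Icc.mpr ⟨hq, le_refl q⟩) hq'
  have hcont : ContinuousAt (fun r : ℝ => (F r).re) 0 := by
    apply Continuous.continuousAt
    apply Complex.continuous_re.comp
    apply continuous_finset_sum
    intro j hj
    exact (continuous_const.mul (Complex.continuous_ofReal.pow _)).mul continuous_const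
  have htend : Tendsto (fun r : ℝ => (F r).re) (𝓝[>] (0:ℝ)) (𝓝 ((F 0).re)) :=
    (hcont.continuousWithinAt).tendsto
  rw [hF0] at htend
  refine le_of_tendsto htend ?_
  filter_upwards [Ioo_mem_nhdsGT_of_mem (by constructor <;> simp [hδ] : (0:ℝ) ∈ Set.Ico 0 δ)]
    with r hr
  have hr0 : (0:ℝ) < r := hr.1
  have hrC : (r : ℂ) ≠ 0 := by exact_mod_cast hr0.ne'
  have key : F r = (r : ℂ) ^ q * ∑ j ∈ Finset.Icc 1 q,
      a j * (((r : ℂ) * Complex.exp (Complex.I * (θ' : ℂ)))⁻¹) ^ j := by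
    rw [hF, Finset.mul_sum]
    apply Finset.sum_congr rfl
    intro j hj
    have hjq : j ≤ q := (Finset.mem_Icc.mp hj).2
    have h1 : ((r : ℂ) * Complex.exp (Complex.I * (θ' : ℂ)))⁻¹ ^ j
        = ((r:ℂ)^j)⁻¹ * (Complex.exp (Complex.I * (θ' : ℂ)))⁻¹ ^ j := by
      rw [mul_inv, mul_pow, inv_pow]
    have h2 : (Complex.exp (Complex.I * (θ' : ℂ)))⁻¹ ^ j
        = Complex.exp (-(Complex.I * (j : ℂ) * (θ' : ℂ))) := by
      rw [← Complex.exp_neg, ← Complex.exp_nat_mul]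
      ring_nf
    have h3 : (r : ℂ) ^ q = (r:ℂ) ^ (q - j) * (r:ℂ) ^ j := pow_sub_mul_pow _ hjq |>.symm
    rw [h1, h2, h3]
    field_simp
  rw [key]
  have hre : ((r : ℂ) ^ q * ∑ j ∈ Finset.Icc 1 q,
      a j * (((r : ℂ) * Complex.exp (Complex.I * (θ' : ℂ)))⁻¹) ^ j).re
      = r ^ q * (∑ j ∈ Finset.Icc 1 q,
      a j * (((r : ℂ) * Complex.exp (Complex.I * (θ' : ℂ)))⁻¹) ^ j).re := by
    rw [show ((r:ℂ)^q) = ((r^q : ℝ) : ℂ) by push_cast; ring, Complex.re_ofReal_mul]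
  rw [hre]
  have := h r hr0 hr.2
  have hpos : (0:ℝ) < r ^ q := pow_pos hr0 q
  exact (mul_neg_of_pos_of_neg hpos this).le

/-- If the polar part `η(z) = ∑_{j=1}^q aⱼ z⁻ʲ` (with `a_q ≠ 0`)
has negative real part on a small open sector `nb(θ₀)`, then the rotated leading
coefficient satisfies `Re(a_q e^{-iqθ₀}) < 0`. -/
theorem sector_negative_implies_leading_term_negative
    (q : ℕ) (hq : 1 ≤ q) (a : ℕ → ℂ) (ha : a q ≠ 0) (θ₀ : ℝ)
    (h : ∃ ε > (0 : ℝ), ∃ δ > (0 : ℝ), ∀ θ' : ℝ, |θ' - θ₀| < ε → ∀ r : ℝ, 0 < r → r < δ →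
      (∑ j ∈ Finset.Icc 1 q,
        a j * (((r : ℂ) * Complex.exp (Complex.I * (θ' : ℂ)))⁻¹) ^ j).re < 0) :
    (a q * Complex.exp (-(Complex.I * (q : ℂ) * (θ₀ : ℂ)))).re < 0 := by
  obtain ⟨ε, hε, δ, hδ, h⟩ := h
  -- g θ = Re(a_q e^{-iqθ})
  set g : ℝ → ℝ := fun θ => (a q).re * Real.cos (q * θ) + (a q).im * Real.sin (q * θ) with hg
  have hgeq : ∀ θ : ℝ, g θ = (a q * Complex.exp (-(Complex.I * (q : ℂ) * (θ : ℂ)))).re := by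
    intro θ
    have : -(Complex.I * (q : ℂ) * (θ : ℂ)) = ((-(q * θ) : ℝ) : ℂ) * Complex.I := by
      push_cast; ring
    rw [this, Complex.mul_re, Complex.exp_ofReal_mul_I_re, Complex.exp_ofReal_mul_I_im]
    simp only [hg, Real.cos_neg, Real.sin_neg]
    ring
  have hle : ∀ θ : ℝ, |θ - θ₀| < ε → g θ ≤ 0 := by
    intro θ hθ
    rw [hgeq]
    exact aux_le q hq a θ δ hδ (h θ hθ)
  rw [← hgeq]
  rcases lt_or_eq_of_le (hle θ₀ (by simpa using hε)) with hlt | heq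
  · exact hlt
  -- contradiction case: g θ₀ = 0
  exfalso
  have hmax : IsLocalMax g θ₀ := by
    filter_upwards [Metric.ball_mem_nhds θ₀ hε] with θ hθ
    rw [heq]
    exact hle θ (by simpa [Real.dist_eq] using hθ)
  have hder : HasDerivAt g
      ((a q).re * (-Real.sin (q * θ₀) * q) + (a q).im * (Real.cos (q * θ₀) * q)) θ₀ := by
    have h1 : HasDerivAt (fun θ : ℝ => (q : ℝ) * θ) q θ₀ := by
      simpa using (hasDerivAt_id θ₀).const_mul (q : ℝ)
    have hc : HasDerivAt (fun θ : ℝ => Real.cos (q * θ)) (-Real.sin (q * θ₀) * q) θ₀ :=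
      (Real.hasDerivAt_cos (q * θ₀)).comp θ₀ h1
    have hs : HasDerivAt (fun θ : ℝ => Real.sin (q * θ)) (Real.cos (q * θ₀) * q) θ₀ :=
      (Real.hasDerivAt_sin (q * θ₀)).comp θ₀ h1
    exact (hc.const_mul _).add (hs.const_mul _)
  have hzero := hmax.hasDerivAt_eq_zero hder
  have hq0 : (0:ℝ) < (q : ℝ) := by exact_mod_cast hq
  have heq' : (a q).re * Real.cos (q * θ₀) + (a q).im * Real.sin (q * θ₀) = 0 := heq
  have hpyth := Real.sin_sq_add_cos_sq ((q:ℝ) * θ₀)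
  have E1 : -(a q).re * Real.sin ((q:ℝ) * θ₀) + (a q).im * Real.cos ((q:ℝ) * θ₀) = 0 := by
    have h2 : (-(a q).re * Real.sin ((q:ℝ) * θ₀) + (a q).im * Real.cos ((q:ℝ) * θ₀)) * (q:ℝ) = 0 := by
      linear_combination hzero
    exact (mul_eq_zero.mp h2).resolve_right hq0.ne'
  have hre0 : (a q).re = 0 := by
    linear_combination Real.cos ((q:ℝ)*θ₀) * heq' - Real.sin ((q:ℝ)*θ₀) * E1 - (a q).re * hpyth
  have him0 : (a q).im = 0 := by
    linear_combination Real.sin ((q:ℝ)*θ₀) * heq' + Real.cos ((q:ℝ)*θ₀) * E1 - (a q).im * hpyth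
  exact ha (Complex.ext hre0 him0)
end

section
/- Let ψ and φ be distinct polar parts and write ψ − φ = Σ_{j=1}^{q} a_j z^{-j} with a_q ≠ 0. Then the set {θ ∈ ℝ : ψ <_θ φ} is equal to {θ ∈ ℝ : Re(a_q e^{-i q θ}) < 0}; in particular it is an open subset of ℝ (equivalently, its image in the circle ℝ/2πℤ is open, a union of open intervals). -/
open Real

/-- Evaluation of a polar part, represented by a polynomial `P` (with zero constant
coefficient) recording the coefficients of the negative powers of `z`:
`P = ∑ aⱼ Xʲ` represents `η(z) = ∑ aⱼ z⁻ʲ`. -/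
noncomputable def polarEval (P : Polynomial ℂ) (z : ℂ) : ℂ := P.eval z⁻¹

/-- The real part of the polar part `P` is negative on a small open sector
`nb(θ)` around the direction `θ`. -/
def sectorNeg (P : Polynomial ℂ) (θ : ℝ) : Prop :=
  ∃ ε > (0 : ℝ), ∃ δ > (0 : ℝ), ∀ θ' : ℝ, |θ' - θ| < ε → ∀ r : ℝ, 0 < r → r < δ →
    (polarEval P ((r : ℂ) * Complex.exp (Complex.I * (θ' : ℂ)))).re < 0

/-- The partial order `ψ ≤_θ φ` between polar parts in the direction `θ`. -/
def leDir (ψ φ : Polynomial ℂ) (θ : ℝ) : Prop := ψ = φ ∨ sectorNeg (ψ - φ) θ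

/-- The strict order `ψ <_θ φ` between polar parts in the direction `θ`. -/
def ltDir (ψ φ : Polynomial ℂ) (θ : ℝ) : Prop := leDir ψ φ θ ∧ ψ ≠ φ

lemma polar_re_eq (a : ℕ → ℂ) (q : ℕ) (r : ℝ) (hr : 0 < r) (θ' : ℝ) :
    r ^ q * (polarEval (∑ j ∈ Finset.Icc 1 q, Polynomial.C (a j) * Polynomial.X ^ j)
        ((r : ℂ) * Complex.exp (Complex.I * (θ' : ℂ)))).re
      = ∑ j ∈ Finset.Icc 1 q,
          r ^ (q - j) * (a j * Complex.exp (-(Complex.I * (j : ℂ) * (θ' : ℂ)))).re := by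
  have hr0 : (r : ℂ) ≠ 0 := Complex.ofReal_ne_zero.mpr hr.ne'
  have hC : (Complex.ofReal (r ^ q)) * polarEval (∑ j ∈ Finset.Icc 1 q, Polynomial.C (a j) * Polynomial.X ^ j)
        ((r : ℂ) * Complex.exp (Complex.I * (θ' : ℂ)))
      = ∑ j ∈ Finset.Icc 1 q,
          (Complex.ofReal (r ^ (q - j))) * (a j * Complex.exp (-(Complex.I * (j : ℂ) * (θ' : ℂ)))) := by
    unfold polarEval
    rw [Polynomial.eval_finset_sum, Finset.mul_sum]
    refine Finset.sum_congr rfl fun j hj => ?_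
    obtain ⟨hj1, hj2⟩ := Finset.mem_Icc.mp hj
    simp only [Polynomial.eval_mul, Polynomial.eval_C, Polynomial.eval_pow, Polynomial.eval_X]
    rw [mul_inv, mul_pow, ← Complex.exp_neg, ← Complex.exp_nat_mul, inv_pow]
    have h3 : (j : ℂ) * -(Complex.I * (θ' : ℂ)) = -(Complex.I * (j : ℂ) * (θ' : ℂ)) := by ring
    have h4 : ((r : ℂ)) ^ (q - j) * (r : ℂ) ^ j = (r : ℂ) ^ q := pow_sub_mul_pow _ hj2
    rw [h3]
    push_cast
    field_simp
    rw [← h4]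
    ring
  have h5 := congrArg Complex.re hC
  rw [Complex.re_ofReal_mul] at h5
  rw [h5, Complex.re_sum]
  exact Finset.sum_congr rfl fun j _ => Complex.re_ofReal_mul _ _


open Polynomial in
/-- For distinct polar parts ψ, φ with ψ - φ = ∑_{j=1}^q aⱼ z⁻ʲ, a_q ≠ 0,
the set of directions θ with ψ <_θ φ equals {θ | Re(a_q e^{-iqθ}) < 0}; in particular
it is an open subset of ℝ. -/
theorem ltDir_set_eq_leading_negative_set
    (ψ φ : Polynomial ℂ) (hψ : ψ.coeff 0 = 0) (hφ : φ.coeff 0 = 0) (hne : ψ ≠ φ)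
    (q : ℕ) (hq : 1 ≤ q) (a : ℕ → ℂ) (ha : a q ≠ 0)
    (hdiff : ψ - φ = ∑ j ∈ Finset.Icc 1 q, Polynomial.C (a j) * Polynomial.X ^ j) :
    {θ : ℝ | ltDir ψ φ θ}
      = {θ : ℝ | (a q * Complex.exp (-(Complex.I * (q : ℂ) * (θ : ℂ)))).re < 0}
    ∧ IsOpen {θ : ℝ | ltDir ψ φ θ} := by

  set g : ℕ → ℝ → ℝ :=
    fun j θ' => (a j * Complex.exp (-(Complex.I * (j : ℂ) * (θ' : ℂ)))).re with hgdef
  set M : ℝ := ∑ j ∈ Finset.Icc 1 (q - 1), ‖a j‖ with hMdef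
  have hM : 0 ≤ M := Finset.sum_nonneg fun j _ => (norm_nonneg _)
  have hM1 : (0 : ℝ) < M + 1 := by linarith
  -- the key formula
  have key : ∀ r : ℝ, 0 < r → ∀ θ' : ℝ,
      r ^ q * (polarEval (ψ - φ) ((r : ℂ) * Complex.exp (Complex.I * (θ' : ℂ)))).re
        = g q θ' + ∑ j ∈ Finset.Icc 1 (q - 1), r ^ (q - j) * g j θ' := by
    intro r hr θ'
    rw [hdiff, polar_re_eq a q r hr θ']
    have hqq : q = (q - 1) + 1 := by omega
    rw [hqq, Finset.sum_Icc_succ_top (by omega : 1 ≤ (q-1) + 1)]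
    rw [← hqq, Nat.sub_self, pow_zero, one_mul, add_comm]
  -- error bound
  have Ebound : ∀ r : ℝ, 0 < r → r < 1 → ∀ θ' : ℝ,
      |∑ j ∈ Finset.Icc 1 (q - 1), r ^ (q - j) * g j θ'| ≤ r * M := by
    intro r hr hr1 θ'
    calc |∑ j ∈ Finset.Icc 1 (q - 1), r ^ (q - j) * g j θ'|
        ≤ ∑ j ∈ Finset.Icc 1 (q - 1), |r ^ (q - j) * g j θ'| :=
          Finset.abs_sum_le_sum_abs _ _
      _ ≤ ∑ j ∈ Finset.Icc 1 (q - 1), r * ‖a j‖ := by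
          refine Finset.sum_le_sum fun j hj => ?_
          obtain ⟨hj1, hj2⟩ := Finset.mem_Icc.mp hj
          rw [abs_mul, abs_pow, abs_of_pos hr]
          have h1 : r ^ (q - j) ≤ r := by
            calc r ^ (q - j) ≤ r ^ 1 := pow_le_pow_of_le_one hr.le hr1.le (by omega)
              _ = r := pow_one r
          have h2 : |g j θ'| ≤ ‖a j‖ := by
            calc |g j θ'| ≤ ‖a j * Complex.exp (-(Complex.I * (j : ℂ) * (θ' : ℂ)))‖ :=
                  Complex.abs_re_le_norm _
              _ = ‖a j‖ := by
                  rw [norm_mul, Complex.norm_exp]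
                  simp
          exact mul_le_mul h1 h2 (abs_nonneg _) hr.le
      _ = r * M := by rw [hMdef, Finset.mul_sum]
  -- forward direction
  have forward : ∀ θ : ℝ, sectorNeg (ψ - φ) θ → g q θ < 0 := by
    intro θ hsec
    obtain ⟨ε, hε, δ, hδ, hsec⟩ := hsec
    have stepA : ∀ θ' : ℝ, |θ' - θ| < ε → g q θ' ≤ 0 := by
      intro θ' hθ'
      by_contra hpos
      push_neg at hpos
      set r := min (min δ 1) (g q θ' / (M + 1)) / 2 with hrdef
      have hrpos : 0 < r := by
        have : 0 < g q θ' / (M + 1) := div_pos hpos hM1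
        have : 0 < min (min δ 1) (g q θ' / (M + 1)) := lt_min (lt_min hδ one_pos) this
        linarith
      have hrδ : r < δ := by
        have h := min_le_left (min δ 1) (g q θ' / (M + 1))
        have h' := min_le_left δ 1
        simp only [hrdef]; linarith
      have hr1 : r < 1 := by
        have h := min_le_left (min δ 1) (g q θ' / (M + 1))
        have h' := min_le_right δ 1
        simp only [hrdef]; linarith
      have hrM : r * M < g q θ' := by
        have h := min_le_right (min δ 1) (g q θ' / (M + 1))
        have hr2 : r ≤ g q θ' / (M + 1) / 2 := by simp only [hrdef]; linarith
        have : r * (M + 1) ≤ g q θ' / (M + 1) / 2 * (M + 1) :=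
          mul_le_mul_of_nonneg_right hr2 hM1.le
        have heq : g q θ' / (M + 1) / 2 * (M + 1) = g q θ' / 2 := by field_simp
        nlinarith
      have hneg := hsec θ' hθ' r hrpos hrδ
      have hkey := key r hrpos θ'
      have hE := abs_le.mp (Ebound r hrpos hr1 θ')
      have hposq : 0 < r ^ q := pow_pos hrpos q
      nlinarith
    have hθ0 : g q θ ≤ 0 := stepA θ (by simpa using hε)
    rcases lt_or_eq_of_le hθ0 with h | h
    · exact h
    exfalso
    set b := a q * Complex.exp (-(Complex.I * (q : ℂ) * (θ : ℂ))) with hb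
    have hbre : b.re = 0 := h
    have hbne : b ≠ 0 := mul_ne_zero ha (Complex.exp_ne_zero _)
    have htne : b.im ≠ 0 := fun him => hbne (Complex.ext hbre him)
    have hqpos : (0 : ℝ) < q := by exact_mod_cast hq
    have hformula : ∀ s : ℝ, g q (θ + s) = b.im * Real.sin ((q : ℝ) * s) := by
      intro s
      have h1 : a q * Complex.exp (-(Complex.I * (q : ℂ) * ((θ + s : ℝ) : ℂ)))
          = b * Complex.exp (-(Complex.I * (q : ℂ) * (s : ℂ))) := by
        have hexp : Complex.exp (-(Complex.I * (q : ℂ) * ((θ + s : ℝ) : ℂ)))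
            = Complex.exp (-(Complex.I * (q : ℂ) * (θ : ℂ)))
              * Complex.exp (-(Complex.I * (q : ℂ) * (s : ℂ))) := by
          rw [← Complex.exp_add]
          congr 1
          push_cast
          ring
        rw [hb, hexp]; ring
      show (a q * Complex.exp (-(Complex.I * (q : ℂ) * ((θ + s : ℝ) : ℂ)))).re = _
      rw [h1, Complex.mul_re]
      have hre : (-(Complex.I * (q : ℂ) * (s : ℂ))).re = 0 := by simp
      have him : (-(Complex.I * (q : ℂ) * (s : ℂ))).im = -((q : ℝ) * s) := by simp
      rw [Complex.exp_re, Complex.exp_im, hre, him, hbre]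
      simp [Real.sin_neg]
    set s₀ := min (ε / 2) (π / (2 * (q : ℝ))) with hs₀
    have hs₀pos : 0 < s₀ := lt_min (by linarith) (by positivity)
    have hs₀ε : s₀ < ε := lt_of_le_of_lt (min_le_left _ _) (by linarith)
    have hqs : 0 < (q : ℝ) * s₀ := by positivity
    have hqsπ : (q : ℝ) * s₀ < π := by
      have h1 : s₀ ≤ π / (2 * (q : ℝ)) := min_le_right _ _
      have h2 : (q : ℝ) * s₀ ≤ (q : ℝ) * (π / (2 * (q : ℝ))) :=
        mul_le_mul_of_nonneg_left h1 hqpos.le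
      have h3 : (q : ℝ) * (π / (2 * (q : ℝ))) = π / 2 := by field_simp
      have := Real.pi_pos
      linarith
    have hsin : 0 < Real.sin ((q : ℝ) * s₀) := Real.sin_pos_of_pos_of_lt_pi hqs hqsπ
    rcases htne.lt_or_gt with ht | ht
    · -- b.im < 0 : use θ - s₀
      have hmem : |(θ + -s₀) - θ| < ε := by
        rw [add_sub_cancel_left, abs_neg, abs_of_pos hs₀pos]; exact hs₀ε
      have := stepA (θ + -s₀) hmem
      rw [hformula (-s₀)] at this
      rw [mul_neg, Real.sin_neg] at this
      nlinarith
    · -- b.im > 0 : use θ + s₀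
      have hmem : |(θ + s₀) - θ| < ε := by
        rw [add_sub_cancel_left, abs_of_pos hs₀pos]; exact hs₀ε
      have := stepA (θ + s₀) hmem
      rw [hformula s₀] at this
      nlinarith
  -- continuity of g q
  have hgcont : Continuous (g q) := by
    apply Complex.continuous_re.comp
    exact continuous_const.mul (Complex.continuous_exp.comp (by fun_prop))
  -- backward direction
  have backward : ∀ θ : ℝ, g q θ < 0 → sectorNeg (ψ - φ) θ := by
    intro θ hθ
    have hopen : IsOpen {θ' : ℝ | g q θ' < g q θ / 2} := isOpen_lt hgcont continuous_const
    have hmem : θ ∈ {θ' : ℝ | g q θ' < g q θ / 2} := by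
      simp only [Set.mem_setOf_eq]; linarith
    obtain ⟨ε, hε, hball⟩ := Metric.isOpen_iff.mp hopen θ hmem
    refine ⟨ε, hε, min 1 (-(g q θ) / 2 / (M + 1)), lt_min one_pos (div_pos (div_pos (by linarith) two_pos) hM1), ?_⟩
    intro θ' hθ' r hr hrδ
    have hθ'mem : g q θ' < g q θ / 2 := by
      have : θ' ∈ Metric.ball θ ε := by rwa [Metric.mem_ball, Real.dist_eq]
      exact hball this
    have hr1 : r < 1 := lt_of_lt_of_le hrδ (min_le_left _ _)
    have hrM : r * M < -(g q θ) / 2 := by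
      have h1 : r < -(g q θ) / 2 / (M + 1) := lt_of_lt_of_le hrδ (min_le_right _ _)
      have h2 : r * (M + 1) < -(g q θ) / 2 / (M + 1) * (M + 1) :=
        mul_lt_mul_of_pos_right h1 hM1
      have heq : -(g q θ) / 2 / (M + 1) * (M + 1) = -(g q θ) / 2 := by field_simp
      nlinarith
    have hkey := key r hr θ'
    have hE := abs_le.mp (Ebound r hr hr1 θ')
    have hposq : 0 < r ^ q := pow_pos hr q
    have hprod : r ^ q * (polarEval (ψ - φ) ((r : ℂ) * Complex.exp (Complex.I * (θ' : ℂ)))).re < 0 := by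
      rw [hkey]; linarith
    nlinarith
  -- assemble
  have hiff : ∀ θ : ℝ, ltDir ψ φ θ ↔ g q θ < 0 := by
    intro θ
    constructor
    · rintro ⟨hle, -⟩
      rcases hle with h | h
      · exact absurd h hne
      · exact forward θ h
    · intro h
      exact ⟨Or.inr (backward θ h), hne⟩
  have hset : {θ : ℝ | ltDir ψ φ θ}
      = {θ : ℝ | (a q * Complex.exp (-(Complex.I * (q : ℂ) * (θ : ℂ)))).re < 0} := by
    ext θ
    simp only [Set.mem_setOf_eq]
    exact hiff θ
  refine ⟨hset, ?_⟩
  rw [hset]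
  exact isOpen_lt hgcont continuous_const
end

section
/- Let ψ and φ be distinct polar parts and write ψ − φ = Σ_{j=1}^{q} a_j z^{-j} with a_q ≠ 0. Then for θ ∈ ℝ, the directions in which ψ and φ are not comparable are exactly the Stokes directions of their difference: (¬(ψ <_θ φ) and ¬(φ <_θ ψ)) holds if and only if Re(a_q e^{-i q θ}) = 0. Moreover there are exactly 2q such directions θ in [0, 2π). -/
open Real

lemma polar_sum_eval (q : ℕ) (b : ℕ → ℂ) (r θ' : ℝ) (hr : 0 < r) :
    (r:ℂ)^q * polarEval (∑ j ∈ Finset.Icc 1 q, Polynomial.C (b j) * Polynomial.X ^ j)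
      ((r:ℂ) * Complex.exp (Complex.I * (θ':ℂ))) =
    ∑ j ∈ Finset.Icc 1 q, b j * (r:ℂ)^(q - j) * Complex.exp (-(Complex.I * (j:ℂ) * (θ':ℂ))) := by
  have hr0 : (r:ℂ) ≠ 0 := by exact_mod_cast hr.ne'
  unfold polarEval
  rw [mul_inv, Polynomial.eval_finset_sum, Finset.mul_sum]
  refine Finset.sum_congr rfl (fun j hj => ?_)
  simp only [Finset.mem_Icc] at hj
  rw [Polynomial.eval_mul, Polynomial.eval_C, Polynomial.eval_pow, Polynomial.eval_X,
    mul_pow, ← Complex.exp_neg, ← Complex.exp_nat_mul, inv_pow, pow_sub₀ (r:ℂ) hr0 hj.2]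
  have : (↑j * -(Complex.I * ↑θ')) = -(Complex.I * (j:ℂ) * (θ':ℂ)) := by ring
  rw [this]; ring

lemma key_est (m : ℕ) (b : ℕ → ℂ) (θ' r : ℝ) (hr : 0 < r) (hr1 : r ≤ 1) :
    |r^(m+1) * (polarEval (∑ j ∈ Finset.Icc 1 (m+1), Polynomial.C (b j) * Polynomial.X ^ j)
        ((r:ℂ) * Complex.exp (Complex.I * (θ':ℂ)))).re
      - (b (m+1) * Complex.exp (-(Complex.I * ((m+1:ℕ):ℂ) * (θ':ℂ)))).re|
    ≤ (∑ j ∈ Finset.Icc 1 m, ‖b j‖) * r := by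
  have h1 : r^(m+1) * (polarEval (∑ j ∈ Finset.Icc 1 (m+1), Polynomial.C (b j) * Polynomial.X ^ j)
        ((r:ℂ) * Complex.exp (Complex.I * (θ':ℂ)))).re
      = ((r:ℂ)^(m+1) * polarEval (∑ j ∈ Finset.Icc 1 (m+1), Polynomial.C (b j) * Polynomial.X ^ j)
        ((r:ℂ) * Complex.exp (Complex.I * (θ':ℂ)))).re := by
    rw [show ((r:ℂ))^(m+1) = ((r^(m+1) : ℝ) : ℂ) by push_cast; ring, Complex.re_ofReal_mul]
  rw [h1, polar_sum_eval _ _ _ _ hr, Finset.sum_Icc_succ_top (by omega : 1 ≤ m + 1)]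
  rw [Nat.sub_self, pow_zero, mul_one]
  rw [Complex.add_re, add_sub_assoc, sub_self, add_zero]
  calc |(∑ j ∈ Finset.Icc 1 m, b j * (r:ℂ)^(m+1-j) * Complex.exp (-(Complex.I * (j:ℂ) * (θ':ℂ)))).re|
      ≤ ‖∑ j ∈ Finset.Icc 1 m, b j * (r:ℂ)^(m+1-j) * Complex.exp (-(Complex.I * (j:ℂ) * (θ':ℂ)))‖ :=
        Complex.abs_re_le_norm _
    _ ≤ ∑ j ∈ Finset.Icc 1 m, ‖b j * (r:ℂ)^(m+1-j) * Complex.exp (-(Complex.I * (j:ℂ) * (θ':ℂ)))‖ :=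
        norm_sum_le _ _
    _ ≤ ∑ j ∈ Finset.Icc 1 m, ‖b j‖ * r := by
        refine Finset.sum_le_sum (fun j hj => ?_)
        simp only [Finset.mem_Icc] at hj
        rw [norm_mul, norm_mul, norm_pow, Complex.norm_real, Real.norm_eq_abs, Complex.norm_exp]
        have hre : (-(Complex.I * (j:ℂ) * (θ':ℂ))).re = 0 := by simp
        rw [hre, Real.exp_zero, mul_one, abs_of_pos hr]
        have : r ^ (m+1-j) ≤ r := by
          have := pow_le_pow_of_le_one hr.le hr1 (by omega : 1 ≤ m + 1 - j)
          simpa using this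
        exact mul_le_mul_of_nonneg_left this (norm_nonneg _)
    _ = (∑ j ∈ Finset.Icc 1 m, ‖b j‖) * r := by rw [Finset.sum_mul]

lemma stokes_c_eq (b : ℂ) (q : ℕ) (t : ℝ) :
    (b * Complex.exp (-(Complex.I * (q:ℂ) * (t:ℂ)))).re
      = ‖b‖ * Real.cos (Complex.arg b - q * t) := by
  conv_lhs => rw [← Complex.norm_mul_exp_arg_mul_I b]
  rw [mul_assoc, ← Complex.exp_add]
  rw [show (Complex.arg b : ℂ) * Complex.I + -(Complex.I * (q:ℂ) * (t:ℂ))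
      = ((Complex.arg b - q * t : ℝ) : ℂ) * Complex.I by push_cast; ring]
  rw [Complex.re_ofReal_mul, Complex.exp_ofReal_mul_I_re]

lemma sectorNeg_iff (m : ℕ) (b : ℕ → ℂ) (hb : b (m+1) ≠ 0) (θ : ℝ) :
    sectorNeg (∑ j ∈ Finset.Icc 1 (m+1), Polynomial.C (b j) * Polynomial.X ^ j) θ ↔
      (b (m+1) * Complex.exp (-(Complex.I * ((m+1:ℕ):ℂ) * (θ:ℂ)))).re < 0 := by
  set c : ℝ → ℝ := fun t => (b (m+1) * Complex.exp (-(Complex.I * ((m+1:ℕ):ℂ) * (t:ℂ)))).re with hc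
  set M : ℝ := ∑ j ∈ Finset.Icc 1 m, ‖b j‖ with hM
  have hM0 : 0 ≤ M := Finset.sum_nonneg (fun j _ => norm_nonneg _)
  have hcont : Continuous c := by
    apply Complex.continuous_re.comp
    exact continuous_const.mul (Complex.continuous_exp.comp
      (((continuous_const.mul Complex.continuous_ofReal)).neg))
  constructor
  · rintro ⟨ε, hε, δ, hδ, H⟩
    -- step 1 : nonpositive on the sector
    have claim1 : ∀ θ' : ℝ, |θ' - θ| < ε → c θ' ≤ 0 := by
      intro θ' hθ'
      by_contra hpos
      push_neg at hpos
      set r : ℝ := min (δ/2) (min 1 (c θ' / (2*(M+1)))) with hrdef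
      have hr : 0 < r := by
        apply lt_min (by linarith)
        apply lt_min one_pos
        positivity
      have hr1 : r ≤ 1 := le_trans (min_le_right _ _) (min_le_left _ _)
      have hrδ : r < δ := lt_of_le_of_lt (min_le_left _ _) (by linarith)
      have hrc : r ≤ c θ' / (2*(M+1)) := le_trans (min_le_right _ _) (min_le_right _ _)
      have hest := key_est m b θ' r hr hr1
      have hneg := H θ' hθ' r hr hrδ
      have habs := abs_le.mp hest
      have hpow : (0:ℝ) < r ^ (m+1) := pow_pos hr _
      have h2 : r^(m+1) * (polarEval (∑ j ∈ Finset.Icc 1 (m+1),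
          Polynomial.C (b j) * Polynomial.X ^ j)
          ((r:ℂ) * Complex.exp (Complex.I * (θ':ℂ)))).re ≤ 0 :=
        le_of_lt (mul_neg_of_pos_of_neg hpow hneg)
      -- c θ' ≤ r^{m+1} Re + M r ≤ M r < c θ'
      have h3 : c θ' ≤ M * r := by
        have := habs.1
        simp only [hc] at *
        linarith
      have h4 : M * r < c θ' := by
        have h5 : (M+1) * r ≤ c θ' / 2 := by
          have := mul_le_mul_of_nonneg_left hrc (by linarith : (0:ℝ) ≤ M + 1)
          calc (M+1) * r ≤ (M+1) * (c θ' / (2*(M+1))) := this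
            _ = c θ' / 2 := by field_simp
        nlinarith
      linarith
    have hc0 : c θ ≤ 0 := claim1 θ (by simpa using hε)
    rcases lt_or_eq_of_le hc0 with h | h
    · exact h
    -- rule out c θ = 0
    exfalso
    have hA : (0:ℝ) < ‖b (m+1)‖ := norm_pos_iff.mpr hb
    set α := Complex.arg (b (m+1)) with hα
    set qr : ℝ := ((m+1:ℕ):ℝ) with hqr
    have hq0 : (0:ℝ) < qr := by positivity
    have hceq : ∀ t : ℝ, c t = ‖b (m+1)‖ * Real.cos (α - qr * t) := by
      intro t; simp only [hc]; rw [stokes_c_eq]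
    have hcos0 : Real.cos (α - qr * θ) = 0 := by
      have := h
      rw [hceq] at this
      rcases mul_eq_zero.mp this with h' | h'
      · exact absurd h' (ne_of_gt hA)
      · exact h'
    set x := α - qr * θ with hx
    have hsin : Real.sin x = 1 ∨ Real.sin x = -1 := by
      have h1 : Real.sin x ^ 2 = 1 := by
        have := Real.sin_sq_add_cos_sq x
        rw [hcos0] at this; nlinarith
      have h2 : (Real.sin x - 1) * (Real.sin x + 1) = 0 := by nlinarith
      rcases mul_eq_zero.mp h2 with h' | h'
      · left; linarith
      · right; linarith
    have hqne : qr ≠ 0 := ne_of_gt hq0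
    set hh : ℝ := min (qr * ε / 2) 1 with hhdef
    have hh0 : 0 < hh := lt_min (by positivity) one_pos
    have hh1 : hh ≤ 1 := min_le_right _ _
    have hhε : hh / qr < ε := by
      have : hh ≤ qr * ε / 2 := min_le_left _ _
      rw [div_lt_iff₀ hq0]
      nlinarith
    have hsinh : 0 < Real.sin hh :=
      Real.sin_pos_of_pos_of_lt_pi hh0 (by linarith [Real.pi_gt_three])
    rcases hsin with hs | hs
    · -- sin x = 1, take θ' = θ + hh/qr
      have harg : α - qr * (θ + hh / qr) = x - hh := by
        field_simp [hx]; ring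
      have hcpos : 0 < c (θ + hh / qr) := by
        rw [hceq, harg, Real.cos_sub, hcos0, hs]
        nlinarith
      have := claim1 (θ + hh / qr) (by
        rw [add_sub_cancel_left, abs_of_pos (by positivity)]
        exact hhε)
      linarith
    · -- sin x = -1, take θ' = θ - hh/qr
      have harg : α - qr * (θ - hh / qr) = x + hh := by
        field_simp [hx]; ring
      have hcpos : 0 < c (θ - hh / qr) := by
        rw [hceq, harg, Real.cos_add, hcos0, hs]
        nlinarith
      have := claim1 (θ - hh / qr) (by
        rw [sub_sub_cancel_left, abs_neg, abs_of_pos (by positivity)]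
        exact hhε)
      linarith
  · intro hcθ
    have hev : ∀ᶠ t in nhds θ, c t < c θ / 2 :=
      hcont.continuousAt.eventually_lt continuousAt_const (by linarith)
    obtain ⟨ε, hε, hball⟩ := Metric.eventually_nhds_iff.mp hev
    have hδpos : 0 < (-(c θ)/2) / (M+1) := div_pos (by linarith) (by linarith)
    refine ⟨ε, hε, min 1 ((-(c θ)/2) / (M+1)), lt_min one_pos hδpos, ?_⟩
    intro θ' hθ' r hr hrδ
    have hr1 : r ≤ 1 := le_of_lt (lt_of_lt_of_le hrδ (min_le_left _ _))
    have hcθ' : c θ' < c θ / 2 := hball (by rwa [Real.dist_eq])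
    have hest := key_est m b θ' r hr hr1
    have habs := abs_le.mp hest
    have hMr : M * r < -(c θ)/2 := by
      have hrb : r < (-(c θ)/2) / (M+1) := lt_of_lt_of_le hrδ (min_le_right _ _)
      have := (lt_div_iff₀ (by linarith : (0:ℝ) < M+1)).mp hrb
      nlinarith
    have h2 : r^(m+1) * (polarEval (∑ j ∈ Finset.Icc 1 (m+1),
        Polynomial.C (b j) * Polynomial.X ^ j)
        ((r:ℂ) * Complex.exp (Complex.I * (θ':ℂ)))).re < 0 := by
      have := habs.2
      simp only [hc] at *
      linarith
    have hpow : (0:ℝ) < r ^ (m+1) := pow_pos hr _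
    nlinarith [h2, hpow]

/-- For distinct polar parts ψ, φ with ψ - φ = ∑_{j=1}^q aⱼ z⁻ʲ, a_q ≠ 0,
the directions in which ψ and φ are not comparable are exactly the Stokes directions
Re(a_q e^{-iqθ}) = 0 of their difference, and there are exactly 2q of them in [0, 2π). -/
theorem not_comparable_iff_stokes_direction
    (ψ φ : Polynomial ℂ) (hψ : ψ.coeff 0 = 0) (hφ : φ.coeff 0 = 0) (hne : ψ ≠ φ)
    (q : ℕ) (hq : 1 ≤ q) (a : ℕ → ℂ) (ha : a q ≠ 0)
    (hdiff : ψ - φ = ∑ j ∈ Finset.Icc 1 q, Polynomial.C (a j) * Polynomial.X ^ j) :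
    (∀ θ : ℝ, (¬ ltDir ψ φ θ ∧ ¬ ltDir φ ψ θ) ↔
      (a q * Complex.exp (-(Complex.I * (q : ℂ) * (θ : ℂ)))).re = 0)
    ∧ {θ ∈ Set.Ico (0 : ℝ) (2 * π) | ¬ ltDir ψ φ θ ∧ ¬ ltDir φ ψ θ}.ncard = 2 * q := by
  obtain ⟨m, rfl⟩ : ∃ m, q = m + 1 := ⟨q - 1, by omega⟩
  set c : ℝ → ℝ := fun t => (a (m+1) * Complex.exp (-(Complex.I * ((m+1:ℕ):ℂ) * (t:ℂ)))).re
    with hcdef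
  have hdiff' : φ - ψ = ∑ j ∈ Finset.Icc 1 (m+1), Polynomial.C (-a j) * Polynomial.X ^ j := by
    have : φ - ψ = -(ψ - φ) := by ring
    rw [this, hdiff, ← Finset.sum_neg_distrib]
    refine Finset.sum_congr rfl (fun j _ => ?_)
    rw [← neg_mul, ← Polynomial.C_neg]
  have hlt1 : ∀ θ : ℝ, ltDir ψ φ θ ↔ c θ < 0 := by
    intro θ
    unfold ltDir leDir
    rw [hdiff]
    constructor
    · rintro ⟨h | h, _⟩
      · exact absurd h hne
      · exact (sectorNeg_iff m a ha θ).mp h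
    · intro h
      exact ⟨Or.inr ((sectorNeg_iff m a ha θ).mpr h), hne⟩
  have hlt2 : ∀ θ : ℝ, ltDir φ ψ θ ↔ 0 < c θ := by
    intro θ
    unfold ltDir leDir
    rw [hdiff']
    have hkey := sectorNeg_iff m (fun j => -a j) (by simpa using ha) θ
    simp only [neg_mul, Complex.neg_re, neg_lt_zero] at hkey
    constructor
    · rintro ⟨h | h, _⟩
      · exact absurd h.symm hne
      · exact hkey.mp h
    · intro h
      exact ⟨Or.inr (hkey.mpr h), Ne.symm hne⟩
  have part1 : ∀ θ : ℝ, (¬ ltDir ψ φ θ ∧ ¬ ltDir φ ψ θ) ↔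
      (a (m+1) * Complex.exp (-(Complex.I * ((m+1:ℕ) : ℂ) * (θ : ℂ)))).re = 0 := by
    intro θ
    rw [hlt1, hlt2]
    constructor
    · rintro ⟨h1, h2⟩; push_neg at h1 h2; exact le_antisymm h2 h1
    · intro h
      constructor
      · simp only [hcdef]; linarith [h]
      · simp only [hcdef]; linarith [h]
  refine ⟨fun θ => by exact_mod_cast part1 θ, ?_⟩
  -- counting part
  have hA : (0:ℝ) < ‖a (m+1)‖ := norm_pos_iff.mpr ha
  set α := Complex.arg (a (m+1)) with hα
  set qr : ℝ := ((m+1:ℕ):ℝ) with hqr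
  have hq0 : (0:ℝ) < qr := by positivity
  have hqne : qr ≠ 0 := ne_of_gt hq0
  have hπ : (0:ℝ) < π := Real.pi_pos
  have hceq : ∀ t : ℝ, c t = ‖a (m+1)‖ * Real.cos (α - qr * t) := by
    intro t; simp only [hcdef]; rw [stokes_c_eq]
  set β : ℝ := (-α - π/2)/π with hβ
  set k₀ : ℤ := ⌈β⌉ with hk₀
  set f : ℤ → ℝ := fun n => (α + (2*(n:ℝ)+1)*π/2)/qr with hf
  have hfinj : Function.Injective f := by
    intro n1 n2 h
    simp only [hf] at h
    have h2 := congrArg (· * qr) h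
    simp only [div_mul_cancel₀ _ hqne] at h2
    have h3 : (n1:ℝ) * π = n2 * π := by nlinarith [h2]
    have := mul_right_cancel₀ (ne_of_gt hπ) h3
    exact_mod_cast this
  have hset : {θ ∈ Set.Ico (0:ℝ) (2*π) | ¬ ltDir ψ φ θ ∧ ¬ ltDir φ ψ θ}
      = f '' ↑(Finset.Ico k₀ (k₀ + 2*(m+1))) := by
    ext θ
    simp only [Set.mem_setOf_eq, Set.mem_Ico, Finset.coe_Ico, Set.mem_image,
      Set.mem_Ico]
    rw [part1 θ]
    have hcθ : (a (m+1) * Complex.exp (-(Complex.I * ((m+1:ℕ):ℂ) * (θ:ℂ)))).re = c θ := rfl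
    constructor
    · rintro ⟨⟨h0, h2⟩, hc0⟩
      rw [hcθ, hceq θ] at hc0
      have hcos : Real.cos (qr*θ - α) = 0 := by
        have := (mul_eq_zero.mp hc0).resolve_left (ne_of_gt hA)
        rw [← Real.cos_neg]; rw [show -(qr*θ - α) = α - qr*θ by ring]; exact this
      obtain ⟨n, hn⟩ := Real.cos_eq_zero_iff.mp hcos
      have hθeq : θ = f n := by
        simp only [hf]
        rw [eq_div_iff hqne]
        linarith [hn]
      have hb1 : (0:ℝ) ≤ α + (2*(n:ℝ)+1)*π/2 := by
        have : qr * θ = α + (2*(n:ℝ)+1)*π/2 := by linarith [hn]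
        nlinarith
      have hb2 : α + (2*(n:ℝ)+1)*π/2 < 2*π*qr := by
        have : qr * θ = α + (2*(n:ℝ)+1)*π/2 := by linarith [hn]
        nlinarith
      refine ⟨n, ⟨?_, ?_⟩, hθeq.symm⟩
      · rw [hk₀]
        apply Int.ceil_le.mpr
        rw [hβ, div_le_iff₀ hπ]
        push_cast
        linarith
      · have : n - 2*((m:ℤ)+1) < k₀ := by
          rw [hk₀]
          apply Int.lt_ceil.mpr
          rw [hβ, lt_div_iff₀ hπ]
          push_cast
          have hqr2 : qr = (m:ℝ) + 1 := by rw [hqr]; push_cast; ring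
          nlinarith
        omega
    · rintro ⟨n, ⟨hn1, hn2⟩, rfl⟩
      have hβn : β ≤ (n:ℝ) := by
        rw [hk₀] at hn1; exact_mod_cast Int.ceil_le.mp hn1
      have hβn2 : ((n:ℝ) - 2*((m:ℝ)+1)) < β := by
        have : n - 2*((m:ℤ)+1) < k₀ := by omega
        rw [hk₀] at this
        have := Int.lt_ceil.mp this
        push_cast at this
        exact_mod_cast this
      rw [hβ, div_le_iff₀ hπ] at hβn
      rw [hβ, lt_div_iff₀ hπ] at hβn2
      have hqr2 : qr = (m:ℝ) + 1 := by rw [hqr]; push_cast; ring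
      have harg : qr * f n = α + (2*(n:ℝ)+1)*π/2 := by
        simp only [hf]
        rw [mul_div_cancel₀ _ hqne]
      refine ⟨⟨?_, ?_⟩, ?_⟩
      · simp only [hf]
        apply div_nonneg _ hq0.le
        linarith
      · simp only [hf]
        rw [div_lt_iff₀ hq0]
        nlinarith
      · rw [hcθ, hceq]
        have : Real.cos (α - qr * f n) = 0 := by
          rw [← Real.cos_neg, show -(α - qr * f n) = qr * f n - α by ring, harg]
          apply Real.cos_eq_zero_iff.mpr
          exact ⟨n, by push_cast; ring⟩
        rw [this, mul_zero]
  rw [hset, Set.ncard_image_of_injective _ hfinj, Set.ncard_coe_finset, Int.card_Ico]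
  omega
end

section
/- Let q ≥ 1 be an integer and let ρ' denote the ramification map z' ↦ z = z'^q. For a polar part φ in the variable z, define its pullback ρ'*φ in the variable z' by (ρ'*φ)(z') = φ(z'^q). Then for all polar parts ψ, φ and all θ' ∈ ℝ: ρ'*ψ ≤_{θ'} ρ'*φ if and only if ψ ≤_{qθ'} φ. (Pullback by a cyclic ramification is compatible with the order between polar parts in a direction, with directions transforming by θ = qθ'.) -/
open Real

/-! In polar coordinates the ramification `z' ↦ z'^q` is `(θ', r) ↦ (qθ', r^q)`, which maps the
germ of sectors around `θ'` onto the germ of sectors around `qθ'`, so `sectorNeg` is transported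
exactly. Pullback along `z'^q` is injective on polynomials, so the equality alternative of `leDir`
is transported as well. -/

open Filter Topology Polynomial

lemma polarEval_comp_X_pow (P : ℂ[X]) (q : ℕ) (r θ : ℝ) :
    polarEval (P.comp (X ^ q)) (r * Complex.exp (Complex.I * θ))
      = polarEval P ((r ^ q : ℝ) * Complex.exp (Complex.I * (q * θ : ℝ))) := by
  rw [polarEval, polarEval, eval_comp, eval_pow, eval_X, inv_pow, mul_pow,
    ← Complex.exp_nat_mul]
  push_cast
  ring_nf

lemma sectorNeg_iff_eventually (P : ℂ[X]) (θ : ℝ) :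
    sectorNeg P θ ↔ ∀ᶠ x : ℝ × ℝ in 𝓝 θ ×ˢ 𝓝[>] 0,
      (polarEval P (x.2 * Complex.exp (Complex.I * x.1))).re < 0 := by
  rw [(Metric.nhds_basis_ball.prod (nhdsGT_basis 0)).eventually_iff]
  simp only [sectorNeg, Prod.exists, Prod.forall, Set.mem_prod, Metric.mem_ball, Real.dist_eq,
    Set.mem_Ioo, and_imp, gt_iff_lt]
  constructor
  · rintro ⟨ε, hε, δ, hδ, h⟩
    exact ⟨ε, δ, ⟨hε, hδ⟩, fun θ' r hθ' hr hrδ => h θ' hθ' r hr hrδ⟩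
  · rintro ⟨ε, δ, ⟨hε, hδ⟩, h⟩
    exact ⟨ε, hε, δ, hδ, fun θ' hθ' r hr hrδ => h θ' r hθ' hr hrδ⟩

lemma tendsto_rpow_nhdsGT_zero {y : ℝ} (hy : 0 < y) :
    Tendsto (· ^ y : ℝ → ℝ) (𝓝[>] 0) (𝓝[>] 0) := by
  refine tendsto_nhdsWithin_iff.2 ⟨?_, eventually_nhdsWithin_of_forall fun x hx => ?_⟩
  · simpa [Real.zero_rpow hy.ne'] using
      (Real.continuousAt_rpow_const 0 y (Or.inr hy.le)).tendsto.mono_left nhdsWithin_le_nhds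
  · exact Real.rpow_pos_of_pos hx y

lemma map_pow_nhdsGT_zero {n : ℕ} (hn : n ≠ 0) :
    map (· ^ n : ℝ → ℝ) (𝓝[>] 0) = 𝓝[>] 0 := by
  have hn' : (0 : ℝ) < n := by positivity
  refine le_antisymm ?_ ?_
  · have h := tendsto_rpow_nhdsGT_zero hn'
    simp only [Real.rpow_natCast] at h
    exact h
  · calc 𝓝[>] (0 : ℝ) = map (fun s => (s ^ (n : ℝ)⁻¹) ^ n) (𝓝[>] 0) := by
          refine (Eq.trans (map_congr ?_) map_id).symm
          exact eventually_nhdsWithin_of_forall fun s hs => Real.rpow_inv_natCast_pow hs.le hn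
      _ = map (· ^ n) (map (· ^ (n : ℝ)⁻¹) (𝓝[>] 0)) := map_map.symm
      _ ≤ map (· ^ n) (𝓝[>] 0) := map_mono (tendsto_rpow_nhdsGT_zero (inv_pos.2 hn'))

lemma map_mul_pow_nhds_prod_nhdsGT_zero {q : ℕ} (hq : q ≠ 0) (θ : ℝ) :
    map (Prod.map ((q : ℝ) * ·) (· ^ q : ℝ → ℝ)) (𝓝 θ ×ˢ 𝓝[>] 0) = 𝓝 (q * θ) ×ˢ 𝓝[>] 0 := by
  rw [← prod_map_map_eq', map_mul_left_nhds₀ (Nat.cast_ne_zero.2 hq), map_pow_nhdsGT_zero hq]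

lemma sectorNeg_comp_X_pow {q : ℕ} (hq : q ≠ 0) (P : ℂ[X]) (θ : ℝ) :
    sectorNeg (P.comp (X ^ q)) θ ↔ sectorNeg P (q * θ) := by
  rw [sectorNeg_iff_eventually, sectorNeg_iff_eventually,
    ← map_mul_pow_nhds_prod_nhdsGT_zero hq, eventually_map]
  simp only [Prod.map_fst, Prod.map_snd, polarEval_comp_X_pow]

theorem leDir_ramification_equivariant_general (q : ℕ) (hq : 1 ≤ q)
    (ψ φ : Polynomial ℂ) (θ' : ℝ) :
    leDir (ψ.comp (Polynomial.X ^ q)) (φ.comp (Polynomial.X ^ q)) θ'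
      ↔ leDir ψ φ ((q : ℝ) * θ') := by
  rw [leDir, leDir, ← sub_comp, sectorNeg_comp_X_pow (by omega),
    ← expand_eq_comp_X_pow, ← expand_eq_comp_X_pow, (expand_injective hq).eq_iff]

/-- compatibility of the order with pullback by the cyclic ramification
z' ↦ z = z'^q: (ρ'*φ)(z') = φ(z'^q) (composition with X^q in our polynomial encoding),
and ρ'*ψ ≤_{θ'} ρ'*φ ↔ ψ ≤_{qθ'} φ. -/
theorem leDir_ramification_equivariant (q : ℕ) (hq : 1 ≤ q)
    (ψ φ : Polynomial ℂ) (hψ : ψ.coeff 0 = 0) (hφ : φ.coeff 0 = 0) (θ' : ℝ) :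
    leDir (ψ.comp (Polynomial.X ^ q)) (φ.comp (Polynomial.X ^ q)) θ'
      ↔ leDir ψ φ ((q : ℝ) * θ') :=
  leDir_ramification_equivariant_general q hq ψ φ θ'
end

section
/- Let ψ, φ, χ be polar parts and θ ∈ ℝ. If ψ <_θ φ, then for the difference φ − ψ = Σ_{j=1}^{q} a_j z^{-j} with a_q ≠ 0 one has Re(a_q e^{-iqθ}) > 0 (the order reverses the sign of the rotated leading coefficient), and the relation is antisymmetric in the strong sense that ψ <_θ φ and φ <_θ ψ cannot hold simultaneously: there is no pair of distinct polar parts each of whose difference has everywhere negative real part on a common small open sector around θ. -/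
open Real

lemma aux_sign (a : ℂ) (ha : a ≠ 0) (q : ℕ) (hq : 1 ≤ q) (θ ε : ℝ) (hε : 0 < ε)
    (h : ∀ θ' : ℝ, |θ' - θ| < ε → 0 ≤ (a * Complex.exp (-(Complex.I * q * θ'))).re) :
    0 < (a * Complex.exp (-(Complex.I * q * θ))).re := by
  have key : ∀ θ' : ℝ, (a * Complex.exp (-(Complex.I * q * θ'))).re
      = a.re * Real.cos (q * θ') + a.im * Real.sin (q * θ') := by
    intro θ'
    have : -(Complex.I * q * θ') = ((-(q * θ') : ℝ) : ℂ) * Complex.I := by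
      push_cast; ring
    rw [this, Complex.mul_re, Complex.exp_ofReal_mul_I_re, Complex.exp_ofReal_mul_I_im,
      Real.cos_neg, Real.sin_neg]
    ring
  rw [key]
  have h0 : 0 ≤ a.re * Real.cos (q * θ) + a.im * Real.sin (q * θ) := by
    have := h θ (by simpa using hε); rwa [key] at this
  rcases lt_or_eq_of_le h0 with h0 | h0
  · exact h0
  exfalso
  set C := Real.cos (q * θ) with hC
  set S := Real.sin (q * θ) with hS
  have hCS : C ^ 2 + S ^ 2 = 1 := by rw [hC, hS, add_comm]; exact Real.sin_sq_add_cos_sq _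
  set c := a.im * C - a.re * S with hc
  have hcne : c ≠ 0 := by
    intro hc0
    apply ha
    have hre : a.re = C * (a.re * C + a.im * S) - S * (a.im * C - a.re * S) := by
      linear_combination (-a.re) * hCS
    have him : a.im = S * (a.re * C + a.im * S) + C * (a.im * C - a.re * S) := by
      linear_combination (-a.im) * hCS
    rw [← h0, ← hc, hc0] at hre him
    exact Complex.ext (by rw [hre]; simp) (by rw [him]; simp)
  have hqpos : (0:ℝ) < q := by exact_mod_cast hq
  set t₀ : ℝ := min (ε / 2) (π / (2 * q)) with ht₀
  have ht₀pos : 0 < t₀ := lt_min (by linarith) (by positivity)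
  have ht₀le : t₀ ≤ ε / 2 := min_le_left _ _
  have hqt₀ : 0 < q * t₀ := by positivity
  have hqt₀lt : q * t₀ < π := by
    have h1 : q * t₀ ≤ q * (π / (2 * q)) :=
      mul_le_mul_of_nonneg_left (min_le_right _ _) (le_of_lt hqpos)
    have h2 : (q:ℝ) * (π / (2 * q)) = π / 2 := by field_simp
    have := Real.pi_pos
    nlinarith
  have hsin : 0 < Real.sin (q * t₀) := Real.sin_pos_of_pos_of_lt_pi hqt₀ hqt₀lt
  set t : ℝ := if 0 < c then -t₀ else t₀ with ht
  have habs : |t| < ε := by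
    rw [ht]
    by_cases hcp : 0 < c
    · rw [if_pos hcp, abs_neg, abs_of_pos ht₀pos]; linarith
    · rw [if_neg hcp, abs_of_pos ht₀pos]; linarith
  have hval := h (θ + t) (by simpa using habs)
  rw [key] at hval
  have hg : a.re * C + a.im * S = 0 := h0.symm
  have hexpand : a.re * Real.cos (q * (θ + t)) + a.im * Real.sin (q * (θ + t))
      = Real.sin (q * t) * c := by
    have he : (q:ℝ) * (θ + t) = q * θ + q * t := by ring
    rw [he, Real.cos_add, Real.sin_add, hc, ← hC, ← hS]
    linear_combination Real.cos ((q:ℝ) * t) * hg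
  rw [hexpand] at hval
  have hneg : Real.sin (q * t) * c < 0 := by
    rw [ht]
    by_cases hcp : 0 < c
    · rw [if_pos hcp, mul_neg, Real.sin_neg]; nlinarith
    · have : c < 0 := lt_of_le_of_ne (not_lt.mp hcp) hcne
      rw [if_neg hcp]; nlinarith
  linarith


lemma aux_limit (q : ℕ) (hq : 1 ≤ q) (a : ℕ → ℂ) (θ' δ : ℝ) (hδ : 0 < δ)
    (h : ∀ r : ℝ, 0 < r → r < δ →
      0 < (∑ j ∈ Finset.Icc 1 q,
        a j * ((((r:ℂ) * Complex.exp (Complex.I * θ'))⁻¹) ^ j)).re) :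
    0 ≤ (a q * Complex.exp (-(Complex.I * q * θ'))).re := by
  set F : ℝ → ℂ := fun r => ∑ j ∈ Finset.Icc 1 q,
    a j * Complex.exp (-(Complex.I * j * θ')) * (r:ℂ) ^ (q - j) with hF
  have hFcont : Continuous F := by
    apply continuous_finset_sum
    intro j _
    exact continuous_const.mul (Complex.continuous_ofReal.pow _)
  have hF0 : F 0 = a q * Complex.exp (-(Complex.I * q * θ')) := by
    rw [hF]
    simp only
    rw [Finset.sum_eq_single q]
    · simp
    · intro j hj hjne
      obtain ⟨hj1, hj2⟩ := Finset.mem_Icc.mp hj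
      have : q - j ≠ 0 := Nat.sub_ne_zero_of_lt (lt_of_le_of_ne hj2 hjne)
      simp [zero_pow this]
    · intro hq'
      exact absurd (Finset.mem_Icc.mpr ⟨hq, le_refl q⟩) hq'
  have hFval : ∀ r : ℝ, 0 < r → F r = (r:ℂ) ^ q *
      ∑ j ∈ Finset.Icc 1 q, a j * ((((r:ℂ) * Complex.exp (Complex.I * θ'))⁻¹) ^ j) := by
    intro r hr
    rw [hF, Finset.mul_sum]
    apply Finset.sum_congr rfl
    intro j hj
    obtain ⟨hj1, hj2⟩ := Finset.mem_Icc.mp hj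
    have hrne : (r:ℂ) ≠ 0 := Complex.ofReal_ne_zero.mpr hr.ne'
    have hexp : Complex.exp (-(Complex.I * j * θ')) = (Complex.exp (Complex.I * θ'))⁻¹ ^ j := by
      rw [← Complex.exp_neg, ← Complex.exp_nat_mul]
      congr 1; ring
    rw [mul_inv_rev, hexp, mul_pow, pow_sub₀ (r:ℂ) hrne hj2, ← inv_pow (r:ℂ) j]
    ring
  have hpos : ∀ r ∈ Set.Ioo (0:ℝ) δ, 0 ≤ (F r).re := by
    intro r hr
    rw [hFval r hr.1]
    have : ((r:ℂ) ^ q) = (((r ^ q : ℝ)) : ℂ) := by push_cast; ring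
    rw [this, Complex.re_ofReal_mul]
    exact le_of_lt (mul_pos (pow_pos hr.1 q) (h r hr.1 hr.2))
  have htend : Filter.Tendsto (fun r => (F r).re) (nhdsWithin 0 (Set.Ioi 0))
      (nhds ((F 0).re)) :=
    ((Complex.continuous_re.comp hFcont).continuousAt).continuousWithinAt
  have hmem : Set.Ioo (0:ℝ) δ ∈ nhdsWithin (0:ℝ) (Set.Ioi 0) :=
    Ioo_mem_nhdsGT_of_mem ⟨le_refl 0, hδ⟩
  have := ge_of_tendsto htend (Filter.eventually_of_mem hmem hpos)
  rwa [hF0] at this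

/-- If ψ <_θ φ then, writing φ - ψ = ∑_{j=1}^q aⱼ z⁻ʲ with a_q ≠ 0,
one has Re(a_q e^{-iqθ}) > 0; and the strict order in a direction is antisymmetric in
the strong sense: no pair of distinct polar parts can satisfy both ψ' <_θ φ' and
φ' <_θ ψ'. -/
theorem ltDir_leading_positive_and_antisymmetric
    (ψ φ χ : Polynomial ℂ) (hψ : ψ.coeff 0 = 0) (hφ : φ.coeff 0 = 0) (hχ : χ.coeff 0 = 0)
    (θ : ℝ) (q : ℕ) (hq : 1 ≤ q) (a : ℕ → ℂ) (ha : a q ≠ 0)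
    (hdiff : φ - ψ = ∑ j ∈ Finset.Icc 1 q, Polynomial.C (a j) * Polynomial.X ^ j) :
    (ltDir ψ φ θ → 0 < (a q * Complex.exp (-(Complex.I * (q : ℂ) * (θ : ℂ)))).re)
    ∧ ∀ ψ' φ' : Polynomial ℂ, ψ'.coeff 0 = 0 → φ'.coeff 0 = 0 → ψ' ≠ φ' →
        ¬ (ltDir ψ' φ' θ ∧ ltDir φ' ψ' θ) := by
  constructor
  · -- leading coefficient positivity
    rintro ⟨hle, hne⟩
    rcases hle with heq | hsec
    · exact absurd heq hne
    obtain ⟨ε, hε, δ, hδ, hsec⟩ := hsec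
    have hev : ∀ z : ℂ, polarEval (ψ - φ) z
        = -∑ j ∈ Finset.Icc 1 q, a j * (z⁻¹) ^ j := by
      intro z
      have hsub : ψ - φ = -(φ - ψ) := by ring
      rw [polarEval, hsub, hdiff, Polynomial.eval_neg, Polynomial.eval_finset_sum]
      simp
    have hkey : ∀ θ' : ℝ, |θ' - θ| < ε →
        0 ≤ (a q * Complex.exp (-(Complex.I * q * θ'))).re := by
      intro θ' hθ'
      apply aux_limit q hq a θ' δ hδ
      intro r hr hrδ
      have := hsec θ' hθ' r hr hrδ
      rw [hev] at this
      simpa using this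
    exact aux_sign (a q) ha q hq θ ε hε hkey
  · -- antisymmetry
    rintro ψ' φ' _ _ hne ⟨⟨hle1, -⟩, ⟨hle2, -⟩⟩
    rcases hle1 with heq | hsec1
    · exact hne heq
    rcases hle2 with heq | hsec2
    · exact hne heq.symm
    obtain ⟨ε₁, hε₁, δ₁, hδ₁, h1⟩ := hsec1
    obtain ⟨ε₂, hε₂, δ₂, hδ₂, h2⟩ := hsec2
    set r : ℝ := min δ₁ δ₂ / 2 with hr
    have hrpos : 0 < r := by positivity
    have hr1 : r < δ₁ := by
      have := min_le_left δ₁ δ₂; rw [hr]; linarith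
    have hr2 : r < δ₂ := by
      have := min_le_right δ₁ δ₂; rw [hr]; linarith
    have ha1 := h1 θ (by simpa using hε₁) r hrpos hr1
    have ha2 := h2 θ (by simpa using hε₂) r hrpos hr2
    have hflip : polarEval (φ' - ψ') ((r:ℂ) * Complex.exp (Complex.I * θ))
        = -polarEval (ψ' - φ') ((r:ℂ) * Complex.exp (Complex.I * θ)) := by
      have : φ' - ψ' = -(ψ' - φ') := by ring
      rw [polarEval, polarEval, this, Polynomial.eval_neg]
    rw [hflip, Complex.neg_re] at ha2
    linarith
end
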